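/- Sufficiency in the Pietsch domination theorem for positive (p₁,…,p_m;r)-dominated operators: let 1 ≤ r, p, p₁,…,p_m < ∞ with 1/p = 1/p₁ + ⋯ + 1/p_m + 1/r, and let T ∈ L(E₁,…,E_m;F). If there exist C > 0, Borel probability measures μ_j on B_{E_j*}⁺ (1 ≤ j ≤ m) and μ_{m+1} on B_{F**}⁺ such that |⟨T(x¹,…,x^m), y*⟩| ≤ C ∏_j (∫ ⟨x^j, φ_j⟩^{p_j} dμ_j)^{1/p_j} (∫ ⟨y*, ψ⟩^r dμ_{m+1})^{1/r} for all x^j ∈ E_j⁺ and y* ∈ F*⁺, then T is positive (p₁,…,p_m;r)-dominated with d⁺_{(p₁,…,p_m;r)}(T) ≤ C. -/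

import Mathlib

open MeasureTheory

/-- The positive part of the dual unit ball, with the weak-* topology. -/
def PosDualBall (E : Type*) [NormedAddCommGroup E] [Lattice E] [HasSolidNorm E] [IsOrderedAddMonoid E] [NormedSpace ℝ E] : Type _ :=
  {φ : WeakDual ℝ E // (∀ x : E, |φ x| ≤ ‖x‖) ∧ ∀ x : E, 0 ≤ x → 0 ≤ φ x}

instance (E : Type*) [NormedAddCommGroup E] [Lattice E] [HasSolidNorm E] [IsOrderedAddMonoid E] [NormedSpace ℝ E] :
    TopologicalSpace (PosDualBall E) :=
  inferInstanceAs (TopologicalSpace (Subtype _))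

noncomputable instance (E : Type*) [NormedAddCommGroup E] [Lattice E] [HasSolidNorm E] [IsOrderedAddMonoid E] [NormedSpace ℝ E] :
    MeasurableSpace (PosDualBall E) := borel _

/-- The positive part of the bidual unit ball, with the weak-* topology. -/
def PosBidualBall (F : Type*) [NormedAddCommGroup F] [Lattice F] [HasSolidNorm F] [IsOrderedAddMonoid F] [NormedSpace ℝ F] : Type _ :=
  {ψ : WeakDual ℝ (F →L[ℝ] ℝ) // (∀ φ : F →L[ℝ] ℝ, |ψ φ| ≤ ‖φ‖) ∧
    ∀ φ : F →L[ℝ] ℝ, (∀ y, 0 ≤ y → 0 ≤ φ y) → 0 ≤ ψ φ}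

instance (F : Type*) [NormedAddCommGroup F] [Lattice F] [HasSolidNorm F] [IsOrderedAddMonoid F] [NormedSpace ℝ F] :
    TopologicalSpace (PosBidualBall F) :=
  inferInstanceAs (TopologicalSpace (Subtype _))

noncomputable instance (F : Type*) [NormedAddCommGroup F] [Lattice F] [HasSolidNorm F] [IsOrderedAddMonoid F] [NormedSpace ℝ F] :
    MeasurableSpace (PosBidualBall F) := borel _

/-- The weak `ℓ_p` norm of a finite positive family, over the positive dual unit ball. -/
noncomputable def wnormPos {E : Type*} [NormedAddCommGroup E] [Lattice E] [HasSolidNorm E] [IsOrderedAddMonoid E] [NormedSpace ℝ E]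
    (p : ℝ) {n : ℕ} (x : Fin n → E) : ℝ :=
  sSup {s : ℝ | ∃ φ : E →L[ℝ] ℝ, ‖φ‖ ≤ 1 ∧ (∀ y, 0 ≤ y → 0 ≤ φ y) ∧
    s = (∑ i, (φ (x i)) ^ p) ^ (1 / p)}

/-- The weak `ℓ_r` norm of a finite positive family of functionals, over the positive
bidual unit ball. -/
noncomputable def wnormDualPos {F : Type*} [NormedAddCommGroup F] [Lattice F] [HasSolidNorm F] [IsOrderedAddMonoid F] [NormedSpace ℝ F]
    (r : ℝ) {n : ℕ} (y : Fin n → (F →L[ℝ] ℝ)) : ℝ :=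
  sSup {s : ℝ | ∃ ψ : (F →L[ℝ] ℝ) →L[ℝ] ℝ, ‖ψ‖ ≤ 1 ∧
    (∀ φ : F →L[ℝ] ℝ, (∀ z, 0 ≤ z → 0 ≤ φ z) → 0 ≤ ψ φ) ∧
    s = (∑ i, (ψ (y i)) ^ r) ^ (1 / r)}

/-! Raise the domination inequality to the power `p` and sum over the family. Since
`p/p₁ + ⋯ + p/p_m + p/r = 1`, Hölder's inequality with these weights bounds the sum by
`C^p ∏ⱼ (∑ᵢ ∫ ω(xᵢʲ)^{pⱼ} dμⱼ)^{p/pⱼ} (∑ᵢ ∫ ψ(yᵢ)^r dν)^{p/r}`. Each inner sum is the integral,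
against a probability measure, of `∑ᵢ ω(xᵢ)^q`, and every point `ω` of the positive dual ball is
one of the functionals over which the weak `ℓ_q` norm is a supremum, so the sum is at most that
norm to the power `q`. -/

open Finset

theorem Real.sum_prod_rpow_mul_rpow_le {ι κ : Type*} [Fintype ι] [Fintype κ]
    {f : κ → ι → ℝ} {g : ι → ℝ} (hf : ∀ k i, 0 ≤ f k i) (hg : ∀ i, 0 ≤ g i)
    {t : κ → ℝ} {q : ℝ} (ht : ∀ k, 0 ≤ t k) (hq : 0 ≤ q) (htq : q + ∑ k, t k = 1) :
    ∑ i, (∏ k, f k i ^ t k) * g i ^ q ≤ (∏ k, (∑ i, f k i) ^ t k) * (∑ i, g i) ^ q := by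
  let _ : MeasurableSpace ι := ⊤
  have : DiscreteMeasurableSpace ι := ⟨fun _ => trivial⟩
  lift g to ι → NNReal using hg
  lift f to κ → ι → NNReal using hf
  have h := ENNReal.lintegral_mul_prod_norm_pow_le (μ := Measure.count) univ
    (g := fun i => (g i : ENNReal)) (f := fun k i => (f k i : ENNReal))
    .of_discrete (fun _ _ => .of_discrete) q htq hq (fun k _ => ht k)
  simp only [lintegral_fintype, Measure.count_singleton, mul_one, ← ENNReal.ofNNReal_finsetSum,
    ← ENNReal.coe_rpow_of_nonneg _ hq, ← ENNReal.coe_rpow_of_nonneg _ (ht _),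
    ← ENNReal.ofNNReal_finsetProd, ← ENNReal.coe_mul, ENNReal.coe_le_coe] at h
  rw [← NNReal.coe_le_coe] at h
  push_cast at h
  simpa only [mul_comm] using h

lemma Real.rpow_div_le_rpow_of_le_rpow {a w s p : ℝ} (ha : 0 ≤ a) (hw : 0 ≤ w) (hs : 0 < s)
    (hp : 0 ≤ p) (h : a ≤ w ^ s) : a ^ (p / s) ≤ w ^ p :=
  calc a ^ (p / s) ≤ (w ^ s) ^ (p / s) := Real.rpow_le_rpow ha h (div_nonneg hp hs.le)
    _ = w ^ p := by rw [← Real.rpow_mul hw, mul_div_cancel₀ _ hs.ne']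

section HolderDomination

variable {ι κ : Type*} [Fintype ι] [Fintype κ] {p r C : ℝ} {s : κ → ℝ}
  {a : κ → ι → ℝ} {b : ι → ℝ} {z : ι → ℝ}

theorem sum_abs_rpow_le_of_abs_le_mul_prod_rpow (hp : 0 < p) (hr : 0 < r) (hs : ∀ k, 0 < s k)
    (hexp : 1 / p = (∑ k, 1 / s k) + 1 / r) (hC : 0 ≤ C)
    (ha : ∀ k i, 0 ≤ a k i) (hb : ∀ i, 0 ≤ b i)
    (hz : ∀ i, |z i| ≤ C * (∏ k, a k i ^ (1 / s k)) * b i ^ (1 / r)) :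
    ∑ i, |z i| ^ p ≤ C ^ p * ((∏ k, (∑ i, a k i) ^ (p / s k)) * (∑ i, b i) ^ (p / r)) := by
  have hweights : p / r + ∑ k, p / s k = 1 := by
    simp_rw [div_eq_mul_one_div p, ← mul_sum]
    rw [← mul_add, add_comm, ← hexp, mul_one_div_cancel hp.ne']
  have hpoint : ∀ i, |z i| ^ p ≤ C ^ p * ((∏ k, a k i ^ (p / s k)) * b i ^ (p / r)) := by
    intro i
    have hprod : 0 ≤ ∏ k, a k i ^ (1 / s k) := prod_nonneg fun k _ => Real.rpow_nonneg (ha k i) _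
    calc |z i| ^ p ≤ (C * (∏ k, a k i ^ (1 / s k)) * b i ^ (1 / r)) ^ p :=
          Real.rpow_le_rpow (abs_nonneg _) (hz i) hp.le
      _ = C ^ p * ((∏ k, a k i ^ (p / s k)) * b i ^ (p / r)) := by
          rw [Real.mul_rpow (mul_nonneg hC hprod) (Real.rpow_nonneg (hb i) _),
            Real.mul_rpow hC hprod,
            ← Real.finsetProd_rpow _ _ fun k _ => Real.rpow_nonneg (ha k i) _, mul_assoc]
          simp only [← Real.rpow_mul (ha _ i), ← Real.rpow_mul (hb i), one_div_mul_eq_div]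
  calc ∑ i, |z i| ^ p ≤ ∑ i, C ^ p * ((∏ k, a k i ^ (p / s k)) * b i ^ (p / r)) :=
        sum_le_sum fun i _ => hpoint i
    _ = C ^ p * ∑ i, (∏ k, a k i ^ (p / s k)) * b i ^ (p / r) := (mul_sum ..).symm
    _ ≤ C ^ p * ((∏ k, (∑ i, a k i) ^ (p / s k)) * (∑ i, b i) ^ (p / r)) := by
        gcongr
        exact Real.sum_prod_rpow_mul_rpow_le ha hb (fun k => (div_pos hp (hs k)).le)
          (div_pos hp hr).le hweights

theorem rpow_sum_abs_rpow_le_of_abs_le_mul_prod_rpow (hp : 0 < p) (hr : 0 < r)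
    (hs : ∀ k, 0 < s k) (hexp : 1 / p = (∑ k, 1 / s k) + 1 / r) (hC : 0 ≤ C)
    (ha : ∀ k i, 0 ≤ a k i) (hb : ∀ i, 0 ≤ b i) {W : κ → ℝ} {V : ℝ}
    (hW : ∀ k, 0 ≤ W k) (hV : 0 ≤ V) (haW : ∀ k, ∑ i, a k i ≤ W k ^ s k)
    (hbV : ∑ i, b i ≤ V ^ r)
    (hz : ∀ i, |z i| ≤ C * (∏ k, a k i ^ (1 / s k)) * b i ^ (1 / r)) :
    (∑ i, |z i| ^ p) ^ (1 / p) ≤ C * (∏ k, W k) * V := by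
  have hWprod : 0 ≤ ∏ k, W k := prod_nonneg fun k _ => hW k
  rw [one_div, Real.rpow_inv_le_iff_of_pos
    (sum_nonneg fun i _ => Real.rpow_nonneg (abs_nonneg _) _)
    (mul_nonneg (mul_nonneg hC hWprod) hV) hp]
  calc ∑ i, |z i| ^ p
      ≤ C ^ p * ((∏ k, (∑ i, a k i) ^ (p / s k)) * (∑ i, b i) ^ (p / r)) :=
        sum_abs_rpow_le_of_abs_le_mul_prod_rpow hp hr hs hexp hC ha hb hz
    _ ≤ C ^ p * ((∏ k, W k ^ p) * V ^ p) := by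
        refine mul_le_mul_of_nonneg_left (mul_le_mul ?_ ?_ ?_ ?_) (Real.rpow_nonneg hC _)
        · exact prod_le_prod (fun k _ => Real.rpow_nonneg (sum_nonneg fun i _ => ha k i) _)
            fun k _ => Real.rpow_div_le_rpow_of_le_rpow (sum_nonneg fun i _ => ha k i) (hW k)
              (hs k) hp.le (haW k)
        · exact Real.rpow_div_le_rpow_of_le_rpow (sum_nonneg fun i _ => hb i) hV hr hp.le hbV
        · exact Real.rpow_nonneg (sum_nonneg fun i _ => hb i) _
        · exact prod_nonneg fun k _ => Real.rpow_nonneg (hW k) _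
    _ = (C * (∏ k, W k) * V) ^ p := by
        rw [Real.mul_rpow (mul_nonneg hC hWprod) hV, Real.mul_rpow hC hWprod,
          ← Real.finsetProd_rpow _ _ fun k _ => hW k, mul_assoc]

end HolderDomination

section DualBall

variable {V : Type*} [NormedAddCommGroup V] [NormedSpace ℝ V]

/-- `PosDualBall E` is definitionally `DualBallNonnegOn (fun x : E => 0 ≤ x)`, and `PosBidualBall F`
is `DualBallNonnegOn P` for `P` the positive functionals on `F`; in the same way `wnormPos` and
`wnormDualPos` are instances of `weakNormNonnegOn`. -/
def DualBallNonnegOn (P : V → Prop) : Type _ :=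
  {φ : WeakDual ℝ V // (∀ x, |φ x| ≤ ‖x‖) ∧ ∀ x, P x → 0 ≤ φ x}

namespace DualBallNonnegOn

variable {P : V → Prop}

instance : TopologicalSpace (DualBallNonnegOn P) := inferInstanceAs (TopologicalSpace (Subtype _))

instance : MeasurableSpace (DualBallNonnegOn P) := borel _

instance : BorelSpace (DualBallNonnegOn P) := ⟨rfl⟩

lemma apply_nonneg (ω : DualBallNonnegOn P) {x : V} (hx : P x) : 0 ≤ ω.1 x := ω.2.2 x hx

lemma norm_toStrongDual_le_one (ω : DualBallNonnegOn P) : ‖WeakDual.toStrongDual ω.1‖ ≤ 1 :=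
  ContinuousLinearMap.opNorm_le_bound _ zero_le_one fun x => by
    simpa [Real.norm_eq_abs] using ω.2.1 x

lemma integrable_rpow_apply (μ : Measure (DualBallNonnegOn P)) [IsFiniteMeasure μ]
    {x : V} (hx : P x) {q : ℝ} (hq : 0 ≤ q) :
    Integrable (fun ω : DualBallNonnegOn P => ω.1 x ^ q) μ := by
  have hcont : Continuous fun ω : DualBallNonnegOn P => ω.1 x ^ q :=
    (Real.continuous_rpow_const hq).comp ((WeakDual.eval_continuous x).comp continuous_subtype_val)
  refine (integrable_const (‖x‖ ^ q)).mono' hcont.aestronglyMeasurable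
    (.of_forall fun ω => ?_)
  rw [Real.norm_of_nonneg (Real.rpow_nonneg (ω.apply_nonneg hx) _)]
  exact Real.rpow_le_rpow (ω.apply_nonneg hx) ((le_abs_self _).trans (ω.2.1 x)) hq

end DualBallNonnegOn

noncomputable def weakNormNonnegOn (P : V → Prop) (q : ℝ) {n : ℕ} (x : Fin n → V) : ℝ :=
  sSup {s : ℝ | ∃ φ : V →L[ℝ] ℝ, ‖φ‖ ≤ 1 ∧ (∀ y, P y → 0 ≤ φ y) ∧
    s = (∑ i, φ (x i) ^ q) ^ (1 / q)}

variable {P : V → Prop} {q : ℝ} {n : ℕ} {x : Fin n → V}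

lemma rpow_sum_le_weakNormNonnegOn (hq : 0 < q) (hx : ∀ i, P (x i)) {φ : V →L[ℝ] ℝ}
    (hφ : ‖φ‖ ≤ 1) (hφP : ∀ y, P y → 0 ≤ φ y) :
    (∑ i, φ (x i) ^ q) ^ (1 / q) ≤ weakNormNonnegOn P q x := by
  refine le_csSup ⟨(∑ i, ‖x i‖ ^ q) ^ (1 / q), ?_⟩ ⟨φ, hφ, hφP, rfl⟩
  rintro s ⟨ψ, hψ, hψP, rfl⟩
  have hψx : ∀ i, 0 ≤ ψ (x i) := fun i => hψP _ (hx i)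
  refine Real.rpow_le_rpow (sum_nonneg fun i _ => Real.rpow_nonneg (hψx i) _)
    (sum_le_sum fun i _ => Real.rpow_le_rpow (hψx i) ?_ hq.le) (by positivity)
  calc ψ (x i) ≤ ‖ψ (x i)‖ := Real.le_norm_self _
    _ ≤ 1 * ‖x i‖ := ψ.le_of_opNorm_le hψ _
    _ = ‖x i‖ := one_mul _

lemma weakNormNonnegOn_nonneg (hq : 0 < q) (hx : ∀ i, P (x i)) : 0 ≤ weakNormNonnegOn P q x := by
  simpa [Real.zero_rpow hq.ne', Real.zero_rpow (inv_ne_zero hq.ne')] using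
    rpow_sum_le_weakNormNonnegOn hq hx (φ := 0) (by simp) fun _ _ => le_rfl

lemma sum_rpow_apply_le_weakNormNonnegOn (hq : 0 < q) (hx : ∀ i, P (x i))
    (ω : DualBallNonnegOn P) : ∑ i, ω.1 (x i) ^ q ≤ weakNormNonnegOn P q x ^ q := by
  have hsum : 0 ≤ ∑ i, ω.1 (x i) ^ q :=
    sum_nonneg fun i _ => Real.rpow_nonneg (ω.apply_nonneg (hx i)) _
  calc ∑ i, ω.1 (x i) ^ q = ((∑ i, ω.1 (x i) ^ q) ^ (1 / q)) ^ q := by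
        rw [← Real.rpow_mul hsum, one_div_mul_cancel hq.ne', Real.rpow_one]
    _ ≤ weakNormNonnegOn P q x ^ q := by
        gcongr
        exact rpow_sum_le_weakNormNonnegOn hq hx ω.norm_toStrongDual_le_one fun y => ω.apply_nonneg

lemma sum_integral_rpow_apply_le_weakNormNonnegOn (hq : 0 < q) (hx : ∀ i, P (x i))
    (μ : Measure (DualBallNonnegOn P)) [hμ : IsProbabilityMeasure μ] :
    ∑ i, ∫ ω, ω.1 (x i) ^ q ∂μ ≤ weakNormNonnegOn P q x ^ q := by
  rw [← integral_finsetSum _ fun i _ => DualBallNonnegOn.integrable_rpow_apply μ (hx i) hq.le]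
  calc ∫ ω, ∑ i, ω.1 (x i) ^ q ∂μ ≤ ∫ _ω, weakNormNonnegOn P q x ^ q ∂μ :=
        integral_mono (integrable_finsetSum _ fun i _ =>
            DualBallNonnegOn.integrable_rpow_apply μ (hx i) hq.le)
          (integrable_const _) (sum_rpow_apply_le_weakNormNonnegOn hq hx)
    _ = weakNormNonnegOn P q x ^ q := by simp

end DualBall

/-- Sufficiency in the Pietsch domination theorem for positive `(p₁,…,p_m;r)`-dominated
operators: a Pietsch-type domination by probability measures on the positive dual
(resp. bidual) unit balls implies that `T` is positive `(p₁,…,p_m;r)`-dominated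
with `d⁺_{(p₁,…,p_m;r)}(T) ≤ C`. -/
theorem pietsch_domination_sufficiency
    {m : ℕ} {E : Fin m → Type*}
    [∀ j, NormedAddCommGroup (E j)] [∀ j, Lattice (E j)] [∀ j, HasSolidNorm (E j)]
    [∀ j, IsOrderedAddMonoid (E j)] [∀ j, NormedSpace ℝ (E j)]
    {F : Type*} [NormedAddCommGroup F] [Lattice F] [HasSolidNorm F] [IsOrderedAddMonoid F] [NormedSpace ℝ F]
    (p r : ℝ) (pj : Fin m → ℝ) (hr : 1 ≤ r) (hpj : ∀ j, 1 ≤ pj j) (hp : 1 ≤ p)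
    (hhol : 1 / p = (∑ j, 1 / pj j) + 1 / r)
    (T : ContinuousMultilinearMap ℝ E F) (C : ℝ) (hC : 0 < C)
    (μ : ∀ j, Measure (PosDualBall (E j))) [∀ j, IsProbabilityMeasure (μ j)]
    (ν : Measure (PosBidualBall F)) [IsProbabilityMeasure ν]
    (hdom : ∀ (x : ∀ j, E j) (φ : F →L[ℝ] ℝ),
      (∀ j, 0 ≤ x j) → (∀ z, 0 ≤ z → 0 ≤ φ z) →
      |φ (T x)| ≤ C * (∏ j, (∫ ω : PosDualBall (E j), (ω.1 (x j)) ^ (pj j) ∂(μ j)) ^ (1 / pj j)) *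
        (∫ ψ : PosBidualBall F, (ψ.1 φ) ^ r ∂ν) ^ (1 / r)) :
    ∀ (n : ℕ) (x : Fin n → ∀ j, E j) (y : Fin n → (F →L[ℝ] ℝ)),
      (∀ i j, 0 ≤ x i j) → (∀ i, ∀ z, 0 ≤ z → 0 ≤ y i z) →
      (∑ i, |y i (T (x i))| ^ p) ^ (1 / p) ≤
        C * (∏ j, wnormPos (pj j) (fun i => x i j)) * wnormDualPos r y := by
  intro n x y hx hy
  have hp₀ : 0 < p := zero_lt_one.trans_le hp
  have hr₀ : 0 < r := zero_lt_one.trans_le hr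
  have hpj₀ : ∀ j, 0 < pj j := fun j => zero_lt_one.trans_le (hpj j)
  have hxj : ∀ j i, 0 ≤ x i j := fun j i => hx i j
  -- instance search does not see through `PosDualBall`, so the measure instances are passed by hand
  refine rpow_sum_abs_rpow_le_of_abs_le_mul_prod_rpow hp₀ hr₀ hpj₀ hhol hC.le
    (fun j i => integral_nonneg fun ω => Real.rpow_nonneg (ω.2.2 _ (hx i j)) _)
    (fun i => integral_nonneg fun ψ => Real.rpow_nonneg (ψ.2.2 _ (hy i)) _)
    (fun j => weakNormNonnegOn_nonneg (hpj₀ j) (hxj j)) (weakNormNonnegOn_nonneg hr₀ hy)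
    (fun j => sum_integral_rpow_apply_le_weakNormNonnegOn (hpj₀ j) (hxj j) (μ j)
      (hμ := inferInstanceAs (IsProbabilityMeasure (μ j))))
    (sum_integral_rpow_apply_le_weakNormNonnegOn hr₀ hy ν
      (hμ := inferInstanceAs (IsProbabilityMeasure ν)))
    fun i => hdom (x i) (y i) (hx i) (hy i)
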